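/- arXiv:1004.2027 — 3 statements merged into one kernel-verified Lean document; each statement's English description precedes it below -/
import Mathlib

section
/- Consider the exact DPP iteration with parameter η > 0 started from an action preference function Ψ_0 with ‖Ψ_0‖ ≤ V_max. Then for every k ≥ 0, the policy π_k induced by DPP at round k satisfies ‖Q* − Q^{π_k}‖ ≤ 2γ(4 V_max + log(L)/η) / ((1−γ)² (k+1)). -/
open Finset Real Filter

variable {X A : Type*}

/-- `(πQ)(x) = Σ_a π(a|x) Q(x,a)`. -/
noncomputable def polApply [Fintype A] (pol : X → A → ℝ) (Q : X → A → ℝ) : X → ℝ :=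
  fun x => ∑ a, pol x a * Q x a

/-- Bellman operator `T^π`. -/
noncomputable def bellman [Fintype X] [Fintype A]
    (P : X → A → X → ℝ) (r : X → A → ℝ) (γ : ℝ) (pol : X → A → ℝ)
    (Q : X → A → ℝ) : X → A → ℝ :=
  fun x a => r x a + γ * ∑ x', ∑ a', P x a x' * pol x' a' * Q x' a'

/-- Bellman optimality operator `T`. -/
noncomputable def bellmanOpt [Fintype X] [Fintype A] [Nonempty A]
    (P : X → A → X → ℝ) (r : X → A → ℝ) (γ : ℝ) (Q : X → A → ℝ) : X → A → ℝ :=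
  fun x a => r x a + γ * ∑ x', P x a x' * (Finset.univ.sup' Finset.univ_nonempty (Q x'))

/-- Soft-max policy associated with action preferences `Ψ` at inverse temperature `η`. -/
noncomputable def softmaxPol [Fintype A] (η : ℝ) (Ψ : X → A → ℝ) : X → A → ℝ :=
  fun x a => Real.exp (η * Ψ x a) / ∑ a', Real.exp (η * Ψ x a')

/-- Supremum norm over state-action pairs. -/
noncomputable def supNorm [Fintype X] [Fintype A] [Nonempty X] [Nonempty A]
    (Q : X → A → ℝ) : ℝ :=
  Finset.univ.sup' Finset.univ_nonempty (fun p : X × A => |Q p.1 p.2|)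

/-! Write `v* x = max_a Q* x a` and let `E_k = Σ_{j<k} π_j Ψ_j - k v*`. Unrolling the recursion with
`r = Q* - γ P v*` gives `Ψ_k = k (Q* - v*) + Ψ_0 + γ P E_k - E_k`. Since `π_k Ψ_k` lies between
`max_a Ψ_k - log L / η` and `max_a Ψ_k`, this identity keeps `E_k` in a band of width
`O((V_max + log L / η) / (1 - γ))` independent of `k`; averaging it once more under `π_k` bounds
`k (v* - π_k Q*)` by a constant. The standard performance-loss estimate
`‖Q* - Q^π‖ ≤ γ / (1 - γ) · sup_x (v* - π Q*)(x)` turns this into the `1 / (k + 1)` rate. -/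

section StdSimplex

variable {ι : Type*} [Fintype ι] {w f : ι → ℝ} {b : ℝ}

lemma sum_mul_le_of_mem_stdSimplex (hw : w ∈ stdSimplex ℝ ι) (hf : ∀ i, f i ≤ b) :
    ∑ i, w i * f i ≤ b :=
  calc ∑ i, w i * f i ≤ ∑ i, w i * b :=
        sum_le_sum fun i _ => mul_le_mul_of_nonneg_left (hf i) (hw.1 i)
    _ = b := by rw [← sum_mul, hw.2, one_mul]

lemma le_sum_mul_of_mem_stdSimplex (hw : w ∈ stdSimplex ℝ ι) (hf : ∀ i, b ≤ f i) :
    b ≤ ∑ i, w i * f i := by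
  have := sum_mul_le_of_mem_stdSimplex (f := fun i => -f i) hw fun i => neg_le_neg (hf i)
  simpa only [mul_neg, sum_neg_distrib, neg_le_neg_iff] using this

lemma abs_sum_mul_le_of_mem_stdSimplex (hw : w ∈ stdSimplex ℝ ι) (hf : ∀ i, |f i| ≤ b) :
    |∑ i, w i * f i| ≤ b :=
  abs_le.2 ⟨le_sum_mul_of_mem_stdSimplex hw fun i => (abs_le.1 (hf i)).1,
    sum_mul_le_of_mem_stdSimplex hw fun i => (abs_le.1 (hf i)).2⟩

lemma neg_log_card_le_sum_mul_log (hw : w ∈ stdSimplex ℝ ι) (hpos : ∀ i, 0 < w i) :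
    -log (Fintype.card ι) ≤ ∑ i, w i * log (w i) := by
  have jensen := strictConcaveOn_log_Ioi.concaveOn.le_map_sum (t := univ) (p := fun i => (w i)⁻¹)
    (fun i _ => hw.1 i) hw.2 fun i _ => Set.mem_Ioi.2 (inv_pos.2 (hpos i))
  have hcard : ∑ i, w i * (w i)⁻¹ = (Fintype.card ι : ℝ) := by
    simp [mul_inv_cancel₀ (hpos _).ne']
  simp only [smul_eq_mul, log_inv, mul_neg, sum_neg_distrib, hcard] at jensen
  linarith

end StdSimplex

noncomputable def maxValue [Fintype A] [Nonempty A] (Q : X → A → ℝ) (x : X) : ℝ :=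
  univ.sup' univ_nonempty (Q x)

noncomputable def transApply [Fintype X] (P : X → A → X → ℝ) (V : X → ℝ) (x : X) (a : A) : ℝ :=
  ∑ x', P x a x' * V x'

lemma transApply_sub [Fintype X] (P : X → A → X → ℝ) (V W : X → ℝ) (x : X) (a : A) :
    transApply P V x a - transApply P W x a = transApply P (fun x' => V x' - W x') x a := by
  simp only [transApply, mul_sub, sum_sub_distrib]

lemma polApply_sub [Fintype A] (pol Q Q' : X → A → ℝ) (x : X) :
    polApply pol Q x - polApply pol Q' x = polApply pol (fun x a => Q x a - Q' x a) x := by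
  simp only [polApply, mul_sub, sum_sub_distrib]

section MaxValue

variable [Fintype A] [Nonempty A] {Q : X → A → ℝ} {x : X}

lemma le_maxValue (Q : X → A → ℝ) (x : X) (a : A) : Q x a ≤ maxValue Q x :=
  le_sup' (Q x) (mem_univ a)

lemma maxValue_le {b : ℝ} (h : ∀ a, Q x a ≤ b) : maxValue Q x ≤ b :=
  sup'_le _ _ fun a _ => h a

lemma exists_eq_maxValue (Q : X → A → ℝ) (x : X) : ∃ a, Q x a = maxValue Q x :=
  let ⟨a, _, h⟩ := exists_mem_eq_sup' univ_nonempty (Q x)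
  ⟨a, h.symm⟩

lemma abs_maxValue_le {b : ℝ} (h : ∀ a, |Q x a| ≤ b) : |maxValue Q x| ≤ b :=
  let ⟨a, ha⟩ := exists_eq_maxValue Q x
  ha ▸ h a

lemma polApply_le_maxValue {pol : X → A → ℝ} (hpol : pol x ∈ stdSimplex ℝ A) :
    polApply pol Q x ≤ maxValue Q x :=
  sum_mul_le_of_mem_stdSimplex hpol (le_maxValue Q x)

end MaxValue

section Softmax

variable [Fintype A] [Nonempty A] (η : ℝ) (Ψ : X → A → ℝ) (x : X)

lemma sum_exp_pos : 0 < ∑ a, exp (η * Ψ x a) :=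
  sum_pos (fun _ _ => exp_pos _) univ_nonempty

lemma softmaxPol_pos (a : A) : 0 < softmaxPol η Ψ x a :=
  div_pos (exp_pos _) (sum_exp_pos η Ψ x)

lemma softmaxPol_mem_stdSimplex : softmaxPol η Ψ x ∈ stdSimplex ℝ A :=
  ⟨fun a => (softmaxPol_pos η Ψ x a).le, by
    simp only [softmaxPol]
    rw [← sum_div, div_self (sum_exp_pos η Ψ x).ne']⟩

lemma log_softmaxPol (a : A) :
    log (softmaxPol η Ψ x a) = η * Ψ x a - log (∑ a', exp (η * Ψ x a')) := by
  rw [softmaxPol, log_div (exp_pos _).ne' (sum_exp_pos η Ψ x).ne', log_exp]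

lemma maxValue_sub_le_polApply_softmaxPol (hη : 0 < η) :
    maxValue Ψ x - log (Fintype.card A) / η ≤ polApply (softmaxPol η Ψ) Ψ x := by
  -- `η · πΨ = log Z - H(π)`, with `η · max Ψ ≤ log Z` and entropy `H(π) ≤ log L`
  have hw := softmaxPol_mem_stdSimplex η Ψ x
  have hmax : η * maxValue Ψ x ≤ log (∑ a', exp (η * Ψ x a')) := by
    obtain ⟨a, ha⟩ := exists_eq_maxValue Ψ x
    rw [le_log_iff_exp_le (sum_exp_pos η Ψ x), ← ha]
    exact single_le_sum (f := fun a => exp (η * Ψ x a)) (fun _ _ => (exp_pos _).le) (mem_univ a)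
  have hgibbs : η * polApply (softmaxPol η Ψ) Ψ x =
      ∑ a, softmaxPol η Ψ x a * log (softmaxPol η Ψ x a) + log (∑ a', exp (η * Ψ x a')) := by
    simp only [polApply, log_softmaxPol, mul_sub, sum_sub_distrib, mul_sum, ← sum_mul, hw.2]
    ring_nf
  have hent := neg_log_card_le_sum_mul_log hw (softmaxPol_pos η Ψ x)
  have h : η * (maxValue Ψ x - log (Fintype.card A) / η) ≤ η * polApply (softmaxPol η Ψ) Ψ x := by
    rw [mul_sub, mul_div_cancel₀ _ hη.ne']
    linarith
  exact le_of_mul_le_mul_left h hη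

end Softmax

section SupNorm

variable [Fintype X] [Fintype A] [Nonempty X] [Nonempty A]

lemma abs_le_supNorm (Q : X → A → ℝ) (x : X) (a : A) : |Q x a| ≤ supNorm Q :=
  le_sup' (fun p : X × A => |Q p.1 p.2|) (mem_univ (x, a))

lemma supNorm_le {Q : X → A → ℝ} {b : ℝ} (h : ∀ x a, |Q x a| ≤ b) : supNorm Q ≤ b :=
  sup'_le _ _ fun p _ => h p.1 p.2

lemma supNorm_nonneg (Q : X → A → ℝ) : 0 ≤ supNorm Q :=
  (abs_nonneg _).trans (abs_le_supNorm Q (Classical.arbitrary X) (Classical.arbitrary A))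

end SupNorm

section Bellman

variable [Fintype X] [Fintype A] {P : X → A → X → ℝ} {r : X → A → ℝ} {γ : ℝ}

lemma bellman_eq_add_transApply (pol Q : X → A → ℝ) (x : X) (a : A) :
    bellman P r γ pol Q x a = r x a + γ * transApply P (polApply pol Q) x a := by
  simp only [bellman, transApply, polApply, mul_sum, mul_assoc]

lemma bellmanOpt_eq_add_transApply [Nonempty A] (Q : X → A → ℝ) (x : X) (a : A) :
    bellmanOpt P r γ Q x a = r x a + γ * transApply P (maxValue Q) x a :=
  rfl

lemma bellmanOpt_sub_bellman [Nonempty A] (pol Q : X → A → ℝ) (x : X) (a : A) :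
    bellmanOpt P r γ Q x a - bellman P r γ pol Q x a =
      γ * transApply P (fun x' => maxValue Q x' - polApply pol Q x') x a := by
  rw [bellmanOpt_eq_add_transApply, bellman_eq_add_transApply, add_sub_add_left_eq_sub, ← mul_sub,
    transApply_sub]

variable [Nonempty X] [Nonempty A]

lemma supNorm_le_of_bellmanOpt_eq_self (hP : ∀ x a, P x a ∈ stdSimplex ℝ X) {Rmax : ℝ}
    (hr : ∀ x a, |r x a| ≤ Rmax) (hγ0 : 0 ≤ γ) (hγ1 : γ < 1) {Q : X → A → ℝ}
    (hQ : bellmanOpt P r γ Q = Q) : supNorm Q ≤ Rmax / (1 - γ) := by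
  have h : supNorm Q ≤ Rmax + γ * supNorm Q := supNorm_le fun x a => by
    rw [← congrFun₂ hQ x a, bellmanOpt_eq_add_transApply]
    have hPV : |transApply P (maxValue Q) x a| ≤ supNorm Q :=
      abs_sum_mul_le_of_mem_stdSimplex (hP x a) fun x' =>
        abs_maxValue_le fun a' => abs_le_supNorm Q x' a'
    calc |r x a + γ * transApply P (maxValue Q) x a|
        ≤ |r x a| + γ * |transApply P (maxValue Q) x a| :=
          (abs_add_le _ _).trans_eq (by rw [abs_mul, abs_of_nonneg hγ0])
      _ ≤ Rmax + γ * supNorm Q := by gcongr; exact hr x a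
  rw [le_div_iff₀ (by linarith)]
  linarith

lemma abs_bellman_sub_bellman_le (hP : ∀ x a, P x a ∈ stdSimplex ℝ X) (hγ0 : 0 ≤ γ)
    {pol : X → A → ℝ} (hpol : ∀ x, pol x ∈ stdSimplex ℝ A) (Q Q' : X → A → ℝ) (x : X) (a : A) :
    |bellman P r γ pol Q x a - bellman P r γ pol Q' x a| ≤
      γ * supNorm (fun x a => Q x a - Q' x a) := by
  rw [bellman_eq_add_transApply, bellman_eq_add_transApply, add_sub_add_left_eq_sub, ← mul_sub,
    transApply_sub, abs_mul, abs_of_nonneg hγ0]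
  gcongr
  refine abs_sum_mul_le_of_mem_stdSimplex (hP x a) fun x' => ?_
  rw [polApply_sub]
  exact abs_sum_mul_le_of_mem_stdSimplex (hpol x') fun a' =>
    abs_le_supNorm (fun x a => Q x a - Q' x a) x' a'

theorem supNorm_sub_le_of_maxValue_sub_polApply_le (hP : ∀ x a, P x a ∈ stdSimplex ℝ X)
    (hγ0 : 0 ≤ γ) (hγ1 : γ < 1) {pol Qstar Qpi : X → A → ℝ} (hpol : ∀ x, pol x ∈ stdSimplex ℝ A)
    (hQstar : bellmanOpt P r γ Qstar = Qstar) (hQpi : bellman P r γ pol Qpi = Qpi) {D : ℝ}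
    (hD : ∀ x, maxValue Qstar x - polApply pol Qstar x ≤ D) :
    supNorm (fun x a => Qstar x a - Qpi x a) ≤ γ * D / (1 - γ) := by
  set s := supNorm (fun x a => Qstar x a - Qpi x a)
  have h : s ≤ γ * D + γ * s := supNorm_le fun x a => by
    have hgap : |transApply P (fun x' => maxValue Qstar x' - polApply pol Qstar x') x a| ≤ D :=
      abs_sum_mul_le_of_mem_stdSimplex (hP x a) fun x' => abs_le.2
        ⟨by linarith [hD x', polApply_le_maxValue (Q := Qstar) (hpol x')], hD x'⟩
    have hsplit : Qstar x a - Qpi x a =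
        (bellmanOpt P r γ Qstar x a - bellman P r γ pol Qstar x a) +
          (bellman P r γ pol Qstar x a - bellman P r γ pol Qpi x a) := by
      conv_lhs => rw [← hQstar, ← hQpi]
      ring
    rw [hsplit, bellmanOpt_sub_bellman]
    calc _ ≤ |γ * transApply P (fun x' => maxValue Qstar x' - polApply pol Qstar x') x a| +
          |bellman P r γ pol Qstar x a - bellman P r γ pol Qpi x a| := abs_add_le _ _
      _ ≤ γ * D + γ * s := by
          rw [abs_mul, abs_of_nonneg hγ0]
          gcongr
          exact abs_bellman_sub_bellman_le hP hγ0 hpol Qstar Qpi x a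
  rw [le_div_iff₀ (by linarith)]
  linarith

end Bellman

noncomputable def dppError [Fintype A] [Nonempty A] (Ψ pol : ℕ → X → A → ℝ) (Q : X → A → ℝ)
    (k : ℕ) (x : X) : ℝ :=
  ∑ j ∈ range k, polApply (pol j) (Ψ j) x - k * maxValue Q x

def IsDPPSequence [Fintype X] [Fintype A] (P : X → A → X → ℝ) (r : X → A → ℝ) (γ : ℝ)
    (Ψ pol : ℕ → X → A → ℝ) : Prop :=
  ∀ k x a, Ψ (k + 1) x a = Ψ k x a + bellman P r γ (pol k) (Ψ k) x a - polApply (pol k) (Ψ k) x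

section DPP

variable [Fintype A] [Nonempty A] {Ψ pol : ℕ → X → A → ℝ} {Qstar : X → A → ℝ}

lemma dppError_zero (x : X) : dppError Ψ pol Qstar 0 x = 0 := by
  simp [dppError]

lemma dppError_succ (k : ℕ) (x : X) :
    dppError Ψ pol Qstar (k + 1) x =
      dppError Ψ pol Qstar k x + polApply (pol k) (Ψ k) x - maxValue Qstar x := by
  simp only [dppError, sum_range_succ]
  push_cast
  ring

variable [Fintype X] {P : X → A → X → ℝ} {r : X → A → ℝ} {γ : ℝ}

theorem IsDPPSequence.eq_add_dppError (hΨ : IsDPPSequence P r γ Ψ pol)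
    (hQstar : bellmanOpt P r γ Qstar = Qstar) (k : ℕ) (x : X) (a : A) :
    Ψ k x a = k * (Qstar x a - maxValue Qstar x) + Ψ 0 x a +
      γ * transApply P (dppError Ψ pol Qstar k) x a - dppError Ψ pol Qstar k x := by
  induction k generalizing x a with
  | zero => simp [dppError_zero, transApply]
  | succ k ih =>
    have hr : r x a = Qstar x a - γ * transApply P (maxValue Qstar) x a := by
      rw [← congrFun₂ hQstar x a, bellmanOpt_eq_add_transApply]
      ring
    have hE : transApply P (dppError Ψ pol Qstar (k + 1)) x a =
        transApply P (dppError Ψ pol Qstar k) x a +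
          transApply P (polApply (pol k) (Ψ k)) x a - transApply P (maxValue Qstar) x a := by
      simp only [transApply, dppError_succ, mul_add, mul_sub, sum_add_distrib, sum_sub_distrib]
    rw [hΨ, bellman_eq_add_transApply, ih x a, hE, dppError_succ, hr]
    push_cast
    ring

lemma IsDPPSequence.maxValue_iterate_le (hΨ : IsDPPSequence P r γ Ψ pol)
    (hP : ∀ x a, P x a ∈ stdSimplex ℝ X) (hγ0 : 0 ≤ γ) (hQstar : bellmanOpt P r γ Qstar = Qstar)
    {V u : ℝ} (hΨ0 : ∀ x a, Ψ 0 x a ≤ V) {k : ℕ}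
    (hu : ∀ x, dppError Ψ pol Qstar k x ≤ u) (x : X) :
    maxValue (Ψ k) x ≤ V + γ * u - dppError Ψ pol Qstar k x :=
  maxValue_le fun a => by
    rw [hΨ.eq_add_dppError hQstar]
    have hgreedy : (k : ℝ) * (Qstar x a - maxValue Qstar x) ≤ 0 :=
      mul_nonpos_of_nonneg_of_nonpos k.cast_nonneg (sub_nonpos.2 (le_maxValue Qstar x a))
    have hPE : γ * transApply P (dppError Ψ pol Qstar k) x a ≤ γ * u :=
      mul_le_mul_of_nonneg_left (sum_mul_le_of_mem_stdSimplex (hP x a) hu) hγ0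
    linarith [hΨ0 x a, hPE]

lemma IsDPPSequence.le_maxValue_iterate (hΨ : IsDPPSequence P r γ Ψ pol)
    (hP : ∀ x a, P x a ∈ stdSimplex ℝ X) (hγ0 : 0 ≤ γ) (hQstar : bellmanOpt P r γ Qstar = Qstar)
    {V l : ℝ} (hΨ0 : ∀ x a, -V ≤ Ψ 0 x a) {k : ℕ}
    (hl : ∀ x, -l ≤ dppError Ψ pol Qstar k x) (x : X) :
    -V - γ * l - dppError Ψ pol Qstar k x ≤ maxValue (Ψ k) x := by
  obtain ⟨a, hgreedy⟩ := exists_eq_maxValue Qstar x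
  refine le_trans ?_ (le_maxValue (Ψ k) x a)
  rw [hΨ.eq_add_dppError hQstar, hgreedy, sub_self, mul_zero, zero_add]
  have hPE : γ * -l ≤ γ * transApply P (dppError Ψ pol Qstar k) x a :=
    mul_le_mul_of_nonneg_left (le_sum_mul_of_mem_stdSimplex (hP x a) hl) hγ0
  linarith [hΨ0 x a, hPE]

theorem IsDPPSequence.dppError_mem_band (hΨ : IsDPPSequence P r γ Ψ pol)
    (hP : ∀ x a, P x a ∈ stdSimplex ℝ X) (hγ0 : 0 ≤ γ) (hγ1 : γ < 1)
    (hQstar : bellmanOpt P r γ Qstar = Qstar) {V c : ℝ} (hc : 0 ≤ c)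
    (hΨ0 : ∀ x a, |Ψ 0 x a| ≤ V) (hQ : ∀ x a, |Qstar x a| ≤ V)
    (hpol : ∀ k x, pol k x ∈ stdSimplex ℝ A)
    (hsoft : ∀ k x, maxValue (Ψ k) x - c ≤ polApply (pol k) (Ψ k) x) (k : ℕ) (x : X) :
    -((2 * V + c) / (1 - γ)) ≤ dppError Ψ pol Qstar k x ∧
      dppError Ψ pol Qstar k x ≤ 2 * V / (1 - γ) := by
  have hγ : 0 < 1 - γ := by linarith
  have hV : 0 ≤ V := (abs_nonneg _).trans (hQ x (Classical.arbitrary A))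
  induction k generalizing x with
  | zero =>
    rw [dppError_zero]
    exact ⟨neg_nonpos.2 (by positivity), by positivity⟩
  | succ k ih =>
    have hv := abs_le.1 (abs_maxValue_le (hQ x))
    rw [dppError_succ]
    constructor
    · have h := hΨ.le_maxValue_iterate hP hγ0 hQstar (fun x a => (abs_le.1 (hΨ0 x a)).1)
        (fun x => (ih x).1) x
      have hl : 2 * V + c + γ * ((2 * V + c) / (1 - γ)) = (2 * V + c) / (1 - γ) := by
        field_simp
        ring
      linarith [hsoft k x]
    · have h := hΨ.maxValue_iterate_le hP hγ0 hQstar (fun x a => (abs_le.1 (hΨ0 x a)).2)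
        (fun x => (ih x).2) x
      have hu : 2 * V + γ * (2 * V / (1 - γ)) = 2 * V / (1 - γ) := by
        field_simp
        ring
      linarith [polApply_le_maxValue (Q := Ψ k) (hpol k x)]

theorem IsDPPSequence.maxValue_sub_polApply_le (hΨ : IsDPPSequence P r γ Ψ pol)
    (hP : ∀ x a, P x a ∈ stdSimplex ℝ X) (hγ0 : 0 ≤ γ) (hγ1 : γ < 1)
    (hQstar : bellmanOpt P r γ Qstar = Qstar) {V c : ℝ} (hc : 0 ≤ c)
    (hΨ0 : ∀ x a, |Ψ 0 x a| ≤ V) (hQ : ∀ x a, |Qstar x a| ≤ V)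
    (hpol : ∀ k x, pol k x ∈ stdSimplex ℝ A)
    (hsoft : ∀ k x, maxValue (Ψ k) x - c ≤ polApply (pol k) (Ψ k) x) (k : ℕ) (x : X) :
    maxValue Qstar x - polApply (pol k) Qstar x ≤ (4 * V + c) / ((1 - γ) * (k + 1)) := by
  have hγ : 0 < 1 - γ := by linarith
  have hband := hΨ.dppError_mem_band hP hγ0 hγ1 hQstar hc hΨ0 hQ hpol hsoft k
  -- `k (v* - Q*) + Ψ_k = Ψ_0 + γ P E_k - E_k` is bounded uniformly in `k`; average it under `π_k`
  have havg : k * (maxValue Qstar x - polApply (pol k) Qstar x) + polApply (pol k) (Ψ k) x ≤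
      V + γ * (2 * V / (1 - γ)) - dppError Ψ pol Qstar k x := by
    have hsum : k * (maxValue Qstar x - polApply (pol k) Qstar x) + polApply (pol k) (Ψ k) x =
        ∑ a, pol k x a * (k * (maxValue Qstar x - Qstar x a) + Ψ k x a) := by
      simp only [polApply, mul_add, sum_add_distrib, mul_sub, sum_sub_distrib,
        mul_left_comm _ (k : ℝ), ← mul_sum, ← sum_mul, (hpol k x).2, one_mul]
    rw [hsum]
    refine sum_mul_le_of_mem_stdSimplex (hpol k x) fun a => ?_
    have hPE : γ * transApply P (dppError Ψ pol Qstar k) x a ≤ γ * (2 * V / (1 - γ)) :=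
      mul_le_mul_of_nonneg_left (sum_mul_le_of_mem_stdSimplex (hP x a) fun x => (hband x).2) hγ0
    rw [hΨ.eq_add_dppError hQstar k x a]
    linarith [(abs_le.1 (hΨ0 x a)).2]
  have hmax := hΨ.le_maxValue_iterate hP hγ0 hQstar (fun x a => (abs_le.1 (hΨ0 x a)).1)
    (fun x => (hband x).1) x
  have hgap : maxValue Qstar x - polApply (pol k) Qstar x ≤ 2 * V := by
    have hv := (abs_le.1 (abs_maxValue_le (hQ x))).2
    have hπQ : -V ≤ polApply (pol k) Qstar x :=
      le_sum_mul_of_mem_stdSimplex (hpol k x) fun a => (abs_le.1 (hQ x a)).1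
    linarith
  have hul : 4 * V + c + γ * (2 * V / (1 - γ) + (2 * V + c) / (1 - γ)) =
      (4 * V + c) / (1 - γ) := by
    field_simp
    ring
  have hkgap : ((k : ℝ) + 1) * (maxValue Qstar x - polApply (pol k) Qstar x) ≤
      (4 * V + c) / (1 - γ) := by
    rw [← hul]
    linarith [hsoft k x]
  rw [le_div_iff₀ hγ] at hkgap
  rw [le_div_iff₀ (by positivity)]
  linarith

end DPP

theorem dpp_performance_loss_bound_general
    {X A : Type*} [Fintype X] [Fintype A] [Nonempty X] [Nonempty A]
    (P : X → A → X → ℝ) (hP0 : ∀ x a x', 0 ≤ P x a x') (hP1 : ∀ x a, ∑ x', P x a x' = 1)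
    (r : X → A → ℝ) (Rmax : ℝ) (hr : ∀ x a, |r x a| ≤ Rmax)
    (γ : ℝ) (hγ0 : 0 ≤ γ) (hγ1 : γ < 1)
    (Vmax : ℝ) (hV : Vmax = Rmax / (1 - γ))
    (η : ℝ) (hη : 0 < η)
    (Ψ : ℕ → X → A → ℝ) (hΨ0 : supNorm (Ψ 0) ≤ Vmax)
    (pol : ℕ → X → A → ℝ) (hpol : ∀ k, pol k = softmaxPol η (Ψ k))
    (hΨ : ∀ k x a, Ψ (k + 1) x a =
      Ψ k x a + bellman P r γ (pol k) (Ψ k) x a - polApply (pol k) (Ψ k) x)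
    (Qstar : X → A → ℝ) (hQstar : bellmanOpt P r γ Qstar = Qstar)
    (Qpi : ℕ → X → A → ℝ) (hQpi : ∀ k, bellman P r γ (pol k) (Qpi k) = Qpi k) :
    ∀ k : ℕ, supNorm (fun x a => Qstar x a - Qpi k x a) ≤
      2 * γ * (4 * Vmax + Real.log (Fintype.card A) / η) /
        ((1 - γ) ^ 2 * (k + 1)) := by
  intro k
  have hP : ∀ x a, P x a ∈ stdSimplex ℝ X := fun x a => ⟨hP0 x a, hP1 x a⟩
  have hpolS : ∀ k x, pol k x ∈ stdSimplex ℝ A := fun k x =>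
    hpol k ▸ softmaxPol_mem_stdSimplex η (Ψ k) x
  have hsoft : ∀ k x, maxValue (Ψ k) x - log (Fintype.card A) / η ≤ polApply (pol k) (Ψ k) x :=
    fun k x => hpol k ▸ maxValue_sub_le_polApply_softmaxPol η (Ψ k) x hη
  have hc : 0 ≤ log (Fintype.card A) / η :=
    div_nonneg (log_nonneg (by exact_mod_cast Fintype.card_pos)) hη.le
  have hQ : ∀ x a, |Qstar x a| ≤ Vmax := fun x a =>
    (abs_le_supNorm Qstar x a).trans (hV ▸ supNorm_le_of_bellmanOpt_eq_self hP hr hγ0 hγ1 hQstar)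
  have hgap := IsDPPSequence.maxValue_sub_polApply_le hΨ hP hγ0 hγ1 hQstar hc
    (fun x a => (abs_le_supNorm (Ψ 0) x a).trans hΨ0) hQ hpolS hsoft k
  refine (supNorm_sub_le_of_maxValue_sub_polApply_le hP hγ0 hγ1 (hpolS k) hQstar (hQpi k)
    hgap).trans ?_
  have hγ : 1 - γ ≠ 0 := by linarith
  have hM : 0 ≤ γ * (4 * Vmax + log (Fintype.card A) / η) :=
    mul_nonneg hγ0 (by linarith [supNorm_nonneg (Ψ 0)])
  calc γ * ((4 * Vmax + log (Fintype.card A) / η) / ((1 - γ) * (k + 1))) / (1 - γ)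
      = γ * (4 * Vmax + log (Fintype.card A) / η) / ((1 - γ) ^ 2 * (k + 1)) := by
        field_simp
    _ ≤ _ := by
        rw [mul_assoc 2]
        exact div_le_div_of_nonneg_right (by linarith) (by positivity)

/-- Theorem 1 of the paper: `ℓ∞`-norm performance-loss bound of exact DPP. -/
theorem dpp_performance_loss_bound
    {X A : Type*} [Fintype X] [Fintype A] [Nonempty X] [Nonempty A]
    (P : X → A → X → ℝ) (hP0 : ∀ x a x', 0 ≤ P x a x') (hP1 : ∀ x a, ∑ x', P x a x' = 1)
    (r : X → A → ℝ) (Rmax : ℝ) (hR : 0 < Rmax) (hr : ∀ x a, |r x a| ≤ Rmax)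
    (γ : ℝ) (hγ0 : 0 ≤ γ) (hγ1 : γ < 1)
    (Vmax : ℝ) (hV : Vmax = Rmax / (1 - γ))
    (η : ℝ) (hη : 0 < η)
    (Ψ : ℕ → X → A → ℝ) (hΨ0 : supNorm (Ψ 0) ≤ Vmax)
    (pol : ℕ → X → A → ℝ) (hpol : ∀ k, pol k = softmaxPol η (Ψ k))
    (hΨ : ∀ k x a, Ψ (k + 1) x a =
      Ψ k x a + bellman P r γ (pol k) (Ψ k) x a - polApply (pol k) (Ψ k) x)
    (Qstar : X → A → ℝ) (hQstar : bellmanOpt P r γ Qstar = Qstar)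
    (Qpi : ℕ → X → A → ℝ) (hQpi : ∀ k, bellman P r γ (pol k) (Qpi k) = Qpi k) :
    ∀ k : ℕ, supNorm (fun x a => Qstar x a - Qpi k x a) ≤
      2 * γ * (4 * Vmax + Real.log (Fintype.card A) / η) /
        ((1 - γ) ^ 2 * (k + 1)) :=
  dpp_performance_loss_bound_general P hP0 hP1 r Rmax hr γ hγ0 hγ1 Vmax hV η hη Ψ hΨ0 pol hpol hΨ
    Qstar hQstar Qpi hQpi
end

section
/- Consider the exact DPP iteration with parameter η > 0 started from Ψ_0 with ‖Ψ_0‖ ≤ V_max. Assume additionally that the MDP has a unique deterministic optimal policy, i.e. for every state x the maximizer a*(x) = argmax_{a} Q*(x,a) is unique. Then for every state x: lim_{k→∞} Ψ_k(x, a*(x)) = V*(x), and for every action a ≠ a*(x), Ψ_k(x,a) → −∞ as k → ∞. -/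
/-! Write `Vₖ = πₖ Ψₖ` for the soft-max value and `V*` for the optimal value. Substituting
`r = Q* - γ P V*` into the DPP recursion, it telescopes to
`Ψₖ = Ψ₀ + k (Q* - V*) + γ P eₖ - eₖ` with `eₖ = ∑_{j<k} (Vⱼ - V*)`. Since the soft-max value is
within `|A| / (e η)` of the maximum, `eₖ` stays bounded, so `Ψₖ(x,a) = k (Q*(x,a) - V*(x)) + O(1)`.
With a unique maximiser `a*`, suboptimal preferences therefore fall linearly to `-∞`, the
soft-max policy concentrates on `a*`, and along `a*` the error `Ψₖ(x,a*(x)) - V*(x)` obeys a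
`γ`-contraction driven by a vanishing perturbation. -/

open Finset Real Filter

variable {X A : Type*}

open Topology

theorem mul_exp_neg_mul_le {η : ℝ} (hη : 0 < η) (t : ℝ) :
    t * exp (-(η * t)) ≤ exp (-1) / η := by
  have h : η * t ≤ exp (η * t - 1) := by linarith [add_one_le_exp (η * t - 1)]
  have hsplit : exp (η * t - 1) * exp (-(η * t)) = exp (-1) := by rw [← exp_add]; ring_nf
  rw [le_div_iff₀ hη]
  nlinarith [exp_pos (-(η * t))]

theorem tendsto_mul_exp_neg_mul_atTop {η : ℝ} (hη : 0 < η) :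
    Tendsto (fun t => t * exp (-(η * t))) atTop (𝓝 0) := by
  have h := ((tendsto_pow_mul_exp_neg_atTop_nhds_zero 1).comp
    (tendsto_id.const_mul_atTop hη)).const_mul η⁻¹
  rw [mul_zero] at h
  refine h.congr fun t => ?_
  simp only [Function.comp_apply, id_eq, pow_one]
  field_simp

theorem tendsto_atTop_of_mul_sub_le {u : ℕ → ℝ} {s C : ℝ} (hs : 0 < s)
    (h : ∀ k : ℕ, (k : ℝ) * s - C ≤ u k) : Tendsto u atTop atTop :=
  tendsto_atTop_mono h <| tendsto_atTop_add_const_right _ _ <|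
    tendsto_natCast_atTop_atTop.atTop_mul_const hs

theorem tendsto_zero_of_le_mul_add {γ : ℝ} {w δ : ℕ → ℝ} (hγ0 : 0 ≤ γ) (hγ1 : γ < 1)
    (hw : ∀ k, 0 ≤ w k) (hδ : Tendsto δ atTop (𝓝 0)) (h : ∀ k, w (k + 1) ≤ γ * w k + δ k) :
    Tendsto w atTop (𝓝 0) := by
  refine tendsto_order.2 ⟨fun a ha => Eventually.of_forall fun k => ha.trans_le (hw k),
    fun ε hε => ?_⟩
  obtain ⟨K, hK⟩ := eventually_atTop.1 <|
    hδ.eventually (ge_mem_nhds (show 0 < (1 - γ) * (ε / 2) by nlinarith))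
  -- once `δ ≤ (1 - γ) ε / 2`, the excess of `w` over `ε / 2` contracts by the factor `γ`
  have hgeom : ∀ n, w (K + n) - ε / 2 ≤ γ ^ n * (w K - ε / 2) := by
    intro n
    induction n with
    | zero => simp
    | succ n ih =>
      calc w (K + n + 1) - ε / 2 ≤ γ * (w (K + n) - ε / 2) := by
            linarith [h (K + n), hK (K + n) (Nat.le_add_right K n)]
        _ ≤ γ * (γ ^ n * (w K - ε / 2)) := mul_le_mul_of_nonneg_left ih hγ0
        _ = γ ^ (n + 1) * (w K - ε / 2) := by ring
  have hpow : Tendsto (fun n => γ ^ n * (w K - ε / 2)) atTop (𝓝 0) := by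
    simpa using (tendsto_pow_atTop_nhds_zero_of_lt_one hγ0 hγ1).mul_const (w K - ε / 2)
  obtain ⟨N, hN⟩ := eventually_atTop.1 (hpow.eventually (gt_mem_nhds (half_pos hε)))
  refine eventually_atTop.2 ⟨K + N, fun k hk => ?_⟩
  obtain ⟨n, rfl⟩ := Nat.exists_eq_add_of_le (le_of_add_le_left hk)
  linarith [hgeom n, hN n (by omega)]

section WeightedAverage

variable {ι : Type*} [Fintype ι] {p f : ι → ℝ} {C : ℝ}

theorem sum_mul_le_of_le (hp0 : ∀ i, 0 ≤ p i) (hp1 : ∑ i, p i = 1) (hf : ∀ i, f i ≤ C) :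
    ∑ i, p i * f i ≤ C :=
  calc ∑ i, p i * f i ≤ ∑ i, p i * C :=
        sum_le_sum fun i _ => mul_le_mul_of_nonneg_left (hf i) (hp0 i)
    _ = C := by rw [← sum_mul, hp1, one_mul]

theorem abs_sum_mul_le (hp0 : ∀ i, 0 ≤ p i) (hp1 : ∑ i, p i = 1) (hf : ∀ i, |f i| ≤ C) :
    |∑ i, p i * f i| ≤ C :=
  calc |∑ i, p i * f i| ≤ ∑ i, p i * |f i| := by
        refine (abs_sum_le_sum_abs _ _).trans_eq (sum_congr rfl fun i _ => ?_)
        rw [abs_mul, abs_of_nonneg (hp0 i)]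
    _ ≤ C := sum_mul_le_of_le hp0 hp1 hf

end WeightedAverage

noncomputable def softValue [Fintype A] (η : ℝ) (Ψ : X → A → ℝ) : X → ℝ :=
  polApply (softmaxPol η Ψ) Ψ

noncomputable def optValue [Fintype A] [Nonempty A] (Q : X → A → ℝ) : X → ℝ :=
  fun x => univ.sup' univ_nonempty (Q x)

section OptValue

variable [Fintype A] [Nonempty A] {Q : X → A → ℝ} {x : X}

theorem le_optValue (a : A) : Q x a ≤ optValue Q x :=
  le_sup' (Q x) (mem_univ a)

theorem exists_eq_optValue (Q : X → A → ℝ) (x : X) : ∃ b, Q x b = optValue Q x :=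
  let ⟨b, _, hb⟩ := exists_mem_eq_sup' univ_nonempty (Q x)
  ⟨b, hb.symm⟩

theorem optValue_eq_of_forall_le {b : A} (h : ∀ a, Q x a ≤ Q x b) : optValue Q x = Q x b :=
  le_antisymm (sup'_le _ _ fun a _ => h a) (le_optValue b)

end OptValue

section Softmax

variable [Fintype A] {η : ℝ} {Ψ : X → A → ℝ} {x : X}

theorem softmaxPol_nonneg (a : A) : 0 ≤ softmaxPol η Ψ x a :=
  div_nonneg (exp_pos _).le (sum_nonneg fun _ _ => (exp_pos _).le)

theorem softmaxPol_le_exp (a b : A) : softmaxPol η Ψ x a ≤ exp (-(η * (Ψ x b - Ψ x a))) := by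
  have hZ : exp (η * Ψ x b) ≤ ∑ a', exp (η * Ψ x a') :=
    single_le_sum (f := fun a' => exp (η * Ψ x a')) (fun _ _ => (exp_pos _).le) (mem_univ b)
  calc softmaxPol η Ψ x a ≤ exp (η * Ψ x a) / exp (η * Ψ x b) :=
        div_le_div_of_nonneg_left (exp_pos _).le (exp_pos _) hZ
    _ = exp (-(η * (Ψ x b - Ψ x a))) := by rw [← exp_sub]; ring_nf

variable [Nonempty A]

theorem sum_softmaxPol : ∑ a, softmaxPol η Ψ x a = 1 := by
  simp only [softmaxPol]
  rw [← sum_div, div_self (sum_pos (fun _ _ => exp_pos _) univ_nonempty).ne']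

theorem softValue_le_of_le {C : ℝ} (h : ∀ a, Ψ x a ≤ C) : softValue η Ψ x ≤ C :=
  sum_mul_le_of_le softmaxPol_nonneg sum_softmaxPol h

theorem sub_softValue_le {b : A} (hb : ∀ a, Ψ x a ≤ Ψ x b) :
    Ψ x b - softValue η Ψ x ≤ ∑ a, (Ψ x b - Ψ x a) * exp (-(η * (Ψ x b - Ψ x a))) :=
  calc Ψ x b - softValue η Ψ x = ∑ a, softmaxPol η Ψ x a * (Ψ x b - Ψ x a) := by
        simp only [softValue, polApply, mul_sub, sum_sub_distrib, ← sum_mul, sum_softmaxPol,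
          one_mul]
    _ ≤ _ := sum_le_sum fun a _ => by
        rw [mul_comm]
        exact mul_le_mul_of_nonneg_left (softmaxPol_le_exp a b) (sub_nonneg.2 (hb a))

theorem sub_card_le_softValue (hη : 0 < η) (b : A) :
    Ψ x b - Fintype.card A * (exp (-1) / η) ≤ softValue η Ψ x := by
  obtain ⟨m, hm⟩ := exists_eq_optValue Ψ x
  have hmax : ∀ a, Ψ x a ≤ Ψ x m := fun a => hm ▸ le_optValue a
  have hgap := (sub_softValue_le (η := η) hmax).trans
    (sum_le_sum fun a _ => mul_exp_neg_mul_le hη (Ψ x m - Ψ x a))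
  rw [sum_const, card_univ, nsmul_eq_mul] at hgap
  linarith [hmax b]

theorem tendsto_sub_softValue {Ψ : ℕ → X → A → ℝ} (hη : 0 < η) {b : A}
    (h : ∀ a, a ≠ b → Tendsto (fun k => Ψ k x b - Ψ k x a) atTop atTop) :
    Tendsto (fun k => Ψ k x b - softValue η (Ψ k) x) atTop (𝓝 0) := by
  have hdom : ∀ᶠ k in atTop, ∀ a, Ψ k x a ≤ Ψ k x b := eventually_all.2 fun a => by
    by_cases ha : a = b
    · exact Eventually.of_forall fun k => ha ▸ le_rfl
    · filter_upwards [(h a ha).eventually_ge_atTop 0] with k hk using by linarith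
  have hterm : ∀ a, Tendsto (fun k => (Ψ k x b - Ψ k x a) * exp (-(η * (Ψ k x b - Ψ k x a))))
      atTop (𝓝 0) := by
    intro a
    by_cases ha : a = b
    · simp [ha]
    · exact (tendsto_mul_exp_neg_mul_atTop hη).comp (h a ha)
  refine tendsto_of_tendsto_of_tendsto_of_le_of_le' tendsto_const_nhds
    (by simpa using tendsto_finsetSum univ fun a _ => hterm a) ?_ ?_
  · filter_upwards [hdom] with k hk using sub_nonneg.2 (softValue_le_of_le hk)
  · filter_upwards [hdom] with k hk using sub_softValue_le hk

end Softmax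

theorem abs_apply_apply_le_norm [Fintype X] [Fintype A] (f : X → A → ℝ) (x : X) (a : A) :
    |f x a| ≤ ‖f‖ :=
  (norm_le_pi_norm (f x) a).trans (norm_le_pi_norm f x)

theorem bellman_eq [Fintype X] [Fintype A] (P : X → A → X → ℝ) (r : X → A → ℝ) (γ : ℝ)
    (pol Q : X → A → ℝ) (x : X) (a : A) :
    bellman P r γ pol Q x a = r x a + γ * ∑ x', P x a x' * polApply pol Q x' := by
  simp only [bellman, polApply, mul_sum, mul_assoc]

def IsDPPIteration [Fintype X] [Fintype A] (P : X → A → X → ℝ) (r : X → A → ℝ) (γ η : ℝ)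
    (Ψ : ℕ → X → A → ℝ) : Prop :=
  ∀ k x a, Ψ (k + 1) x a =
    Ψ k x a + bellman P r γ (softmaxPol η (Ψ k)) (Ψ k) x a - softValue η (Ψ k) x

noncomputable def cumError [Fintype A] [Nonempty A] (η : ℝ) (Ψ : ℕ → X → A → ℝ)
    (Q : X → A → ℝ) (k : ℕ) (x : X) : ℝ :=
  ∑ j ∈ range k, (softValue η (Ψ j) x - optValue Q x)

namespace IsDPPIteration

variable [Fintype X] [Fintype A] [Nonempty A] {P : X → A → X → ℝ} {r : X → A → ℝ} {γ η : ℝ}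
  {Ψ : ℕ → X → A → ℝ} {Qstar : X → A → ℝ}

theorem step_eq (hΨ : IsDPPIteration P r γ η Ψ) (hQ : bellmanOpt P r γ Qstar = Qstar)
    (k : ℕ) (x : X) (a : A) :
    Ψ (k + 1) x a = Ψ k x a + (Qstar x a - optValue Qstar x)
      + γ * ∑ x', P x a x' * (softValue η (Ψ k) x' - optValue Qstar x')
      - (softValue η (Ψ k) x - optValue Qstar x) := by
  have hQxa : Qstar x a = r x a + γ * ∑ x', P x a x' * optValue Qstar x' := by
    conv_lhs => rw [← hQ]
    rfl
  rw [hΨ k x a, bellman_eq, hQxa]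
  simp only [softValue, mul_sub, sum_sub_distrib]
  ring

theorem eq_cumError (hΨ : IsDPPIteration P r γ η Ψ) (hQ : bellmanOpt P r γ Qstar = Qstar)
    (k : ℕ) (x : X) (a : A) :
    Ψ k x a = Ψ 0 x a + k * (Qstar x a - optValue Qstar x)
      + γ * ∑ x', P x a x' * cumError η Ψ Qstar k x' - cumError η Ψ Qstar k x := by
  induction k with
  | zero => simp [cumError]
  | succ k ih =>
    rw [hΨ.step_eq hQ, ih]
    simp only [cumError, sum_range_succ, mul_add, sum_add_distrib]
    push_cast
    ring

theorem exists_abs_cumError_le (hP0 : ∀ x a x', 0 ≤ P x a x')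
    (hP1 : ∀ x a, ∑ x', P x a x' = 1) (hγ0 : 0 ≤ γ) (hγ1 : γ < 1) (hη : 0 < η)
    (hΨ : IsDPPIteration P r γ η Ψ) (hQ : bellmanOpt P r γ Qstar = Qstar) :
    ∃ E, ∀ k x, |cumError η Ψ Qstar k x| ≤ E := by
  set c : ℝ := Fintype.card A * (exp (-1) / η)
  have hc : 0 ≤ c := by positivity
  have hM : ∀ x, |optValue Qstar x| ≤ ‖optValue Qstar‖ :=
    fun x => norm_le_pi_norm (optValue Qstar) x
  set E := (‖Ψ 0‖ + ‖optValue Qstar‖ + c) / (1 - γ)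
  have hE0 : 0 ≤ E := div_nonneg (by positivity) (by linarith)
  have hE : γ * E + (‖Ψ 0‖ + ‖optValue Qstar‖ + c) = E := by
    simp only [E]
    field_simp [(by linarith : (1 - γ) ≠ 0)]
    ring
  refine ⟨E, fun k => ?_⟩
  induction k with
  | zero => simpa [cumError] using fun _ : X => hE0
  | succ k ih =>
    intro x
    have hPe : ∀ a, |∑ x', P x a x' * cumError η Ψ Qstar k x'| ≤ E :=
      fun a => abs_sum_mul_le (hP0 x a) (hP1 x a) ih
    have hupper : softValue η (Ψ k) x ≤ ‖Ψ 0‖ + γ * E - cumError η Ψ Qstar k x :=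
      softValue_le_of_le fun a => by
        have hk : (k : ℝ) * (Qstar x a - optValue Qstar x) ≤ 0 :=
          mul_nonpos_of_nonneg_of_nonpos k.cast_nonneg (sub_nonpos.2 (le_optValue a))
        rw [hΨ.eq_cumError hQ]
        linarith [(abs_le.1 (abs_apply_apply_le_norm (Ψ 0) x a)).2,
          mul_le_mul_of_nonneg_left (abs_le.1 (hPe a)).2 hγ0]
    obtain ⟨b, hb⟩ := exists_eq_optValue Qstar x
    have hlower : -‖Ψ 0‖ - γ * E - cumError η Ψ Qstar k x - c ≤ softValue η (Ψ k) x := by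
      refine le_trans ?_ (sub_card_le_softValue hη b)
      rw [hΨ.eq_cumError hQ, hb, sub_self, mul_zero]
      linarith [(abs_le.1 (abs_apply_apply_le_norm (Ψ 0) x b)).1,
        mul_le_mul_of_nonneg_left (abs_le.1 (hPe b)).1 hγ0]
    have hsucc : cumError η Ψ Qstar (k + 1) x
        = cumError η Ψ Qstar k x + (softValue η (Ψ k) x - optValue Qstar x) :=
      sum_range_succ _ _
    rw [hsucc, abs_le]
    constructor <;> linarith [abs_le.1 (hM x)]

theorem exists_abs_sub_mul_le (hP0 : ∀ x a x', 0 ≤ P x a x')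
    (hP1 : ∀ x a, ∑ x', P x a x' = 1) (hγ0 : 0 ≤ γ) (hγ1 : γ < 1) (hη : 0 < η)
    (hΨ : IsDPPIteration P r γ η Ψ) (hQ : bellmanOpt P r γ Qstar = Qstar) :
    ∃ C, ∀ (k : ℕ) x a, |Ψ k x a - k * (Qstar x a - optValue Qstar x)| ≤ C := by
  obtain ⟨E, hE⟩ := hΨ.exists_abs_cumError_le hP0 hP1 hγ0 hγ1 hη hQ
  refine ⟨‖Ψ 0‖ + γ * E + E, fun k x a => ?_⟩
  have hPe := abs_le.1 (abs_sum_mul_le (hP0 x a) (hP1 x a) (hE k))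
  have hΨ0 := abs_le.1 (abs_apply_apply_le_norm (Ψ 0) x a)
  rw [hΨ.eq_cumError hQ, abs_le]
  constructor <;> linarith [abs_le.1 (hE k x), mul_le_mul_of_nonneg_left hPe.1 hγ0,
    mul_le_mul_of_nonneg_left hPe.2 hγ0]

theorem tendsto_optValue (hP0 : ∀ x a x', 0 ≤ P x a x') (hP1 : ∀ x a, ∑ x', P x a x' = 1)
    (hγ0 : 0 ≤ γ) (hγ1 : γ < 1) (hΨ : IsDPPIteration P r γ η Ψ)
    (hQ : bellmanOpt P r γ Qstar = Qstar) {astar : X → A}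
    (hQa : ∀ x, Qstar x (astar x) = optValue Qstar x)
    (hε : ∀ x, Tendsto (fun k => Ψ k x (astar x) - softValue η (Ψ k) x) atTop (𝓝 0)) (x : X) :
    Tendsto (fun k => Ψ k x (astar x)) atTop (𝓝 (optValue Qstar x)) := by
  set u : ℕ → X → ℝ := fun k x => Ψ k x (astar x) - optValue Qstar x with hu
  set ε : ℕ → X → ℝ := fun k x => Ψ k x (astar x) - softValue η (Ψ k) x with hε_def
  have hrec : ∀ k x, u (k + 1) x = ε k x + γ * ∑ x', P x (astar x) x' * (u k x' - ε k x') := by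
    intro k x
    simp only [hu, hε_def, sub_sub_sub_cancel_left]
    rw [hΨ.step_eq hQ, hQa]
    ring
  have hnorm : ∀ k, ‖u (k + 1)‖ ≤ γ * ‖u k‖ + 2 * ‖ε k‖ := by
    intro k
    refine (pi_norm_le_iff_of_nonneg
      (add_nonneg (mul_nonneg hγ0 (norm_nonneg _)) (by positivity))).2 fun x => ?_
    have hP : |∑ x', P x (astar x) x' * (u k x' - ε k x')| ≤ ‖u k‖ + ‖ε k‖ :=
      abs_sum_mul_le (hP0 x (astar x)) (hP1 x (astar x)) fun x' =>
        (norm_le_pi_norm (u k - ε k) x').trans (norm_sub_le _ _)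
    rw [Real.norm_eq_abs, hrec]
    calc |ε k x + γ * ∑ x', P x (astar x) x' * (u k x' - ε k x')|
        ≤ ‖ε k‖ + γ * (‖u k‖ + ‖ε k‖) := by
          refine (abs_add_le _ _).trans (add_le_add (norm_le_pi_norm (ε k) x) ?_)
          rw [abs_mul, abs_of_nonneg hγ0]
          exact mul_le_mul_of_nonneg_left hP hγ0
      _ ≤ γ * ‖u k‖ + 2 * ‖ε k‖ := by nlinarith [norm_nonneg (ε k)]
  have hε0 : Tendsto (fun k => 2 * ‖ε k‖) atTop (𝓝 0) := by
    simpa using (tendsto_zero_iff_norm_tendsto_zero.1 (tendsto_pi_nhds.2 hε)).const_mul 2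
  have hu0 := tendsto_zero_iff_norm_tendsto_zero.2 <|
    tendsto_zero_of_le_mul_add hγ0 hγ1 (fun k => norm_nonneg _) hε0 hnorm
  exact tendsto_sub_nhds_zero_iff.1 (tendsto_pi_nhds.1 hu0 x)

end IsDPPIteration

theorem dpp_action_preference_limit_general
    {X A : Type*} [Fintype X] [Fintype A] [Nonempty A]
    (P : X → A → X → ℝ) (hP0 : ∀ x a x', 0 ≤ P x a x') (hP1 : ∀ x a, ∑ x', P x a x' = 1)
    (r : X → A → ℝ)
    (γ : ℝ) (hγ0 : 0 ≤ γ) (hγ1 : γ < 1)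
    (η : ℝ) (hη : 0 < η)
    (Ψ : ℕ → X → A → ℝ)
    (pol : ℕ → X → A → ℝ) (hpol : ∀ k, pol k = softmaxPol η (Ψ k))
    (hΨ : ∀ k x a, Ψ (k + 1) x a =
      Ψ k x a + bellman P r γ (pol k) (Ψ k) x a - polApply (pol k) (Ψ k) x)
    (Qstar : X → A → ℝ) (hQstar : bellmanOpt P r γ Qstar = Qstar)
    (astar : X → A)
    (hastar : ∀ x a, a ≠ astar x → Qstar x a < Qstar x (astar x)) :
    ∀ x : X,
      Filter.Tendsto (fun k => Ψ k x (astar x)) Filter.atTop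
        (nhds (Finset.univ.sup' Finset.univ_nonempty (Qstar x))) ∧
      ∀ a : A, a ≠ astar x →
        Filter.Tendsto (fun k => Ψ k x a) Filter.atTop Filter.atBot := by
  have hdpp : IsDPPIteration P r γ η Ψ := fun k x a => by rw [hΨ k x a, hpol]; rfl
  have hQa : ∀ x, Qstar x (astar x) = optValue Qstar x := fun x =>
    (optValue_eq_of_forall_le fun a => by
      rcases eq_or_ne a (astar x) with rfl | ha
      exacts [le_rfl, (hastar x a ha).le]).symm
  have hslope : ∀ x a, a ≠ astar x → 0 < optValue Qstar x - Qstar x a := fun x a ha =>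
    sub_pos.2 ((hastar x a ha).trans_eq (hQa x))
  obtain ⟨C, hC⟩ := hdpp.exists_abs_sub_mul_le hP0 hP1 hγ0 hγ1 hη hQstar
  have hgap : ∀ x a, a ≠ astar x →
      Tendsto (fun k => Ψ k x (astar x) - Ψ k x a) atTop atTop := fun x a ha =>
    tendsto_atTop_of_mul_sub_le (C := 2 * C) (hslope x a ha) fun k => by
      have hopt := abs_le.1 (hC k x (astar x))
      rw [hQa x, sub_self, mul_zero] at hopt
      linarith [abs_le.1 (hC k x a)]
  refine fun x => ⟨hdpp.tendsto_optValue hP0 hP1 hγ0 hγ1 hQstar hQa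
    (fun x => tendsto_sub_softValue hη (hgap x)) x, fun a ha => ?_⟩
  exact tendsto_neg_atTop_iff.1 <| tendsto_atTop_of_mul_sub_le (C := C) (hslope x a ha)
    fun k => by linarith [abs_le.1 (hC k x a)]

/-- Theorem 2 of the paper: under a unique deterministic optimal policy, the DPP action
preferences converge to `V*(x)` at the optimal action and to `−∞` elsewhere. -/
theorem dpp_action_preference_limit
    {X A : Type*} [Fintype X] [Fintype A] [Nonempty X] [Nonempty A]
    (P : X → A → X → ℝ) (hP0 : ∀ x a x', 0 ≤ P x a x') (hP1 : ∀ x a, ∑ x', P x a x' = 1)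
    (r : X → A → ℝ) (Rmax : ℝ) (hR : 0 < Rmax) (hr : ∀ x a, |r x a| ≤ Rmax)
    (γ : ℝ) (hγ0 : 0 ≤ γ) (hγ1 : γ < 1)
    (Vmax : ℝ) (hV : Vmax = Rmax / (1 - γ))
    (η : ℝ) (hη : 0 < η)
    (Ψ : ℕ → X → A → ℝ) (hΨ0 : supNorm (Ψ 0) ≤ Vmax)
    (pol : ℕ → X → A → ℝ) (hpol : ∀ k, pol k = softmaxPol η (Ψ k))
    (hΨ : ∀ k x a, Ψ (k + 1) x a =
      Ψ k x a + bellman P r γ (pol k) (Ψ k) x a - polApply (pol k) (Ψ k) x)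
    (Qstar : X → A → ℝ) (hQstar : bellmanOpt P r γ Qstar = Qstar)
    (astar : X → A)
    (hastar : ∀ x a, a ≠ astar x → Qstar x a < Qstar x (astar x)) :
    ∀ x : X,
      Filter.Tendsto (fun k => Ψ k x (astar x)) Filter.atTop
        (nhds (Finset.univ.sup' Finset.univ_nonempty (Qstar x))) ∧
      ∀ a : A, a ≠ astar x →
        Filter.Tendsto (fun k => Ψ k x a) Filter.atTop Filter.atBot :=
  dpp_action_preference_limit_general P hP0 hP1 r γ hγ0 hγ1 η hη Ψ pol hpol hΨ Qstar hQstar astar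
    hastar
end

section
/- Consider the exact DPP iteration with parameter η > 0 started from Ψ_0, and define the auxiliary action-value functions by Q_0 = Ψ_0 and Q_k = ((k−1)/k) T^{π_{k−1}} Q_{k−1} + (1/k) T^{π_{k−1}} Q_0 for k ≥ 1, where π_k is the soft-max policy associated with Ψ_k. Then for every integer k ≥ 1 and every state-action pair (x,a): Ψ_k(x,a) = k Q_k(x,a) + Q_0(x,a) − [π_{k−1}((k−1) Q_{k−1} + Q_0)](x). -/
open Finset Real Filter

variable {X A : Type*}

lemma softmax_sum_one [Fintype A] [Nonempty A] (η : ℝ) (Ψ : X → A → ℝ) (x : X) :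
    ∑ a, softmaxPol η Ψ x a = 1 := by
  simp only [softmaxPol]
  rw [← Finset.sum_div]
  exact div_self (ne_of_gt (Finset.sum_pos (fun a _ => Real.exp_pos _) Finset.univ_nonempty))

lemma polApply_sub_const [Fintype A] (p : X → A → ℝ) (hp : ∀ x, ∑ a, p x a = 1)
    (F : X → A → ℝ) (c : X → ℝ) (x : X) :
    polApply p (fun x' a' => F x' a' - c x') x = polApply p F x - c x := by
  simp only [polApply, mul_sub]
  rw [Finset.sum_sub_distrib, ← Finset.sum_mul, hp, one_mul]

lemma bellman_sub_const [Fintype X] [Fintype A]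
    (P : X → A → X → ℝ) (r : X → A → ℝ) (γ : ℝ) (p : X → A → ℝ)
    (hp : ∀ x, ∑ a, p x a = 1) (F : X → A → ℝ) (c : X → ℝ) (x : X) (a : A) :
    bellman P r γ p (fun x' a' => F x' a' - c x') x a =
      bellman P r γ p F x a - γ * ∑ x', P x a x' * c x' := by
  simp only [bellman]
  have h : ∀ x', ∑ a', P x a x' * p x' a' * (F x' a' - c x')
      = (∑ a', P x a x' * p x' a' * F x' a') - P x a x' * c x' := by
    intro x'
    simp only [mul_sub, Finset.sum_sub_distrib]
    congr 1
    calc ∑ a', P x a x' * p x' a' * c x'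
        = (P x a x' * c x') * ∑ a', p x' a' := by
          rw [Finset.mul_sum]; exact Finset.sum_congr rfl (fun a' _ => by ring)
      _ = P x a x' * c x' := by rw [hp, mul_one]
  rw [Finset.sum_congr rfl (fun x' _ => h x'), Finset.sum_sub_distrib, mul_sub]
  ring

lemma bellman_combine [Fintype X] [Fintype A]
    (P : X → A → X → ℝ) (r : X → A → ℝ) (γ : ℝ) (p : X → A → ℝ) (t : ℝ)
    (Q1 Q2 : X → A → ℝ) (x : X) (a : A) :
    bellman P r γ p (fun x' a' => t * Q1 x' a' + Q2 x' a') x a =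
      t * bellman P r γ p Q1 x a + bellman P r γ p Q2 x a - t * r x a := by
  simp only [bellman]
  have h : ∀ x', ∑ a', P x a x' * p x' a' * (t * Q1 x' a' + Q2 x' a')
      = t * (∑ a', P x a x' * p x' a' * Q1 x' a') + ∑ a', P x a x' * p x' a' * Q2 x' a' := by
    intro x'
    rw [Finset.mul_sum, ← Finset.sum_add_distrib]
    exact Finset.sum_congr rfl (fun a' _ => by ring)
  rw [Finset.sum_congr rfl (fun x' _ => h x'), Finset.sum_add_distrib, ← Finset.mul_sum]
  ring

lemma bellman_eq_polApply [Fintype X] [Fintype A]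
    (P : X → A → X → ℝ) (r : X → A → ℝ) (γ : ℝ) (p : X → A → ℝ)
    (G : X → A → ℝ) (x : X) (a : A) :
    bellman P r γ p G x a = r x a + γ * ∑ x', P x a x' * polApply p G x' := by
  simp only [bellman, polApply]
  have h : ∀ x', ∑ a', P x a x' * p x' a' * G x' a'
      = P x a x' * ∑ a', p x' a' * G x' a' := by
    intro x'
    rw [Finset.mul_sum]
    exact Finset.sum_congr rfl (fun a' _ => by ring)
  rw [Finset.sum_congr rfl (fun x' _ => h x')]

/-- Lemma 1 of the paper: the DPP action preferences expressed through the auxiliary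
action-value functions, `Ψ_k = k Q_k + Q_0 − π_{k−1}((k−1) Q_{k−1} + Q_0)`. -/
theorem dpp_preference_auxiliary_representation
    {X A : Type*} [Fintype X] [Fintype A] [Nonempty X] [Nonempty A]
    (P : X → A → X → ℝ) (hP0 : ∀ x a x', 0 ≤ P x a x') (hP1 : ∀ x a, ∑ x', P x a x' = 1)
    (r : X → A → ℝ) (Rmax : ℝ) (hR : 0 < Rmax) (hr : ∀ x a, |r x a| ≤ Rmax)
    (γ : ℝ) (hγ0 : 0 ≤ γ) (hγ1 : γ < 1)
    (η : ℝ) (hη : 0 < η)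
    (Ψ : ℕ → X → A → ℝ)
    (pol : ℕ → X → A → ℝ) (hpol : ∀ k, pol k = softmaxPol η (Ψ k))
    (hΨ : ∀ k x a, Ψ (k + 1) x a =
      Ψ k x a + bellman P r γ (pol k) (Ψ k) x a - polApply (pol k) (Ψ k) x)
    (Q : ℕ → X → A → ℝ) (hQ0 : Q 0 = Ψ 0)
    (hQ : ∀ k : ℕ, ∀ x a, Q (k + 1) x a =
      ((k : ℝ) / (k + 1)) * bellman P r γ (pol k) (Q k) x a +
        (1 / ((k : ℝ) + 1)) * bellman P r γ (pol k) (Q 0) x a) :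
    ∀ k : ℕ, ∀ x a, Ψ (k + 1) x a =
      ((k : ℝ) + 1) * Q (k + 1) x a + Q 0 x a -
        polApply (pol k) (fun x' a' => (k : ℝ) * Q k x' a' + Q 0 x' a') x := by
  have hp1 : ∀ k x, ∑ a, pol k x a = 1 := by
    intro k x; rw [hpol]; exact softmax_sum_one η (Ψ k) x
  intro k
  induction k with
  | zero =>
    intro x a
    have hq1 : Q 1 x a = bellman P r γ (pol 0) (Q 0) x a := by
      rw [hQ 0 x a]; norm_num
    rw [hΨ 0 x a]
    simp only [Nat.cast_zero, zero_mul, zero_add, one_mul, hq1, hQ0]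
    ring
  | succ n IH =>
    intro x a
    -- abbreviations as plain lambdas
    have hfun : Ψ (n + 1) = fun y b =>
        (((n : ℝ) + 1) * Q (n + 1) y b + Q 0 y b) -
          polApply (pol n) (fun x' a' => (n : ℝ) * Q n x' a' + Q 0 x' a') y := by
      funext y b; exact IH y b
    have hn1 : ((n : ℝ) + 1) ≠ 0 := by positivity
    have hn2 : ((n : ℝ) + 1 + 1) ≠ 0 := by positivity
    -- fact (4): (n+1) Q_{n+1} = (n+1) r + γ Σ P c
    have h4 : ((n : ℝ) + 1) * Q (n + 1) x a = ((n : ℝ) + 1) * r x a +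
        γ * ∑ x', P x a x' *
          polApply (pol n) (fun y b => (n : ℝ) * Q n y b + Q 0 y b) x' := by
      have hmul : ((n : ℝ) + 1) * Q (n + 1) x a =
          (n : ℝ) * bellman P r γ (pol n) (Q n) x a + bellman P r γ (pol n) (Q 0) x a := by
        rw [hQ n x a]; field_simp
      have hb := bellman_combine P r γ (pol n) (n : ℝ) (Q n) (Q 0) x a
      have hpa := bellman_eq_polApply P r γ (pol n)
        (fun y b => (n : ℝ) * Q n y b + Q 0 y b) x a
      rw [hb] at hpa
      rw [hmul]; linarith [hpa]
    -- fact (5): (n+2) Q_{n+2} = (n+1) T Q_{n+1} + T Q_0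
    have h5 : ((n : ℝ) + 1 + 1) * Q (n + 1 + 1) x a =
        ((n : ℝ) + 1) * bellman P r γ (pol (n + 1)) (Q (n + 1)) x a +
          bellman P r γ (pol (n + 1)) (Q 0) x a := by
      rw [hQ (n + 1) x a]; push_cast; field_simp
    -- linearity of bellman on F
    have h3 := bellman_combine P r γ (pol (n + 1)) ((n : ℝ) + 1) (Q (n + 1)) (Q 0) x a
    -- unfold the recursion and split off the constant
    rw [hΨ (n + 1) x a]
    simp only [hfun]
    rw [bellman_sub_const P r γ (pol (n + 1)) (hp1 (n + 1)) _ _ x a,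
        polApply_sub_const (pol (n + 1)) (hp1 (n + 1)) _ _ x]
    push_cast
    rw [h3]
    linarith [h4, h5]
end
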